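/- Let A be a deterministic finite automaton and T ⊆ 2^S a table such that no element of T is a terminal strongly connected component of A. Then L(A, T) is meagre (of first Baire category) in the Cantor space X^ω. -/

import Mathlib

open Set

/-- `w` is a finite prefix of the infinite word `ξ`. -/
def InfPrefix {X : Type*} (w : List X) (ξ : ℕ → X) : Prop :=
  ∀ i : Fin w.length, w.get i = ξ i.val

/-- The set of finite prefixes of elements of `F`. -/
def Pref {X : Type*} (F : Set (ℕ → X)) : Set (List X) :=
  {w | ∃ ξ ∈ F, InfPrefix w ξ}

/-- Concatenation of a finite word in front of an infinite word. -/
def wordCat {X : Type*} (w : List X) (ξ : ℕ → X) : ℕ → X :=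
  fun n => if h : n < w.length then w.get ⟨n, h⟩ else ξ (n - w.length)


/-- A deterministic automaton with initial state and transition function. -/
structure DetAuto (X S : Type*) where
  start : S
  step : S → X → S

/-- The extension of the transition function to finite words. -/
def DetAuto.run {X S : Type*} (A : DetAuto X S) (s : S) (w : List X) : S :=
  w.foldl A.step s

/-- The state reached after reading the first `n` letters of `ξ`. -/
def DetAuto.statesAt {X S : Type*} (A : DetAuto X S) (ξ : ℕ → X) (n : ℕ) : S :=
  A.run A.start (List.ofFn fun i : Fin n => ξ i.val)

/-- `Inf(A, ξ)`: the set of states visited infinitely often on input `ξ`. -/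
def AInf {X S : Type*} (A : DetAuto X S) (ξ : ℕ → X) : Set S :=
  {s | ∀ n : ℕ, ∃ m ≥ n, A.statesAt ξ m = s}

/-- Muller acceptance: `L(A, T)`. -/
def Lang {X S : Type*} (A : DetAuto X S) (T : Set (Set S)) : Set (ℕ → X) :=
  {ξ | AInf A ξ ∈ T}

/-- `LOOP_A`: the set of realizable infinity sets. -/
def Loops {X S : Type*} (A : DetAuto X S) : Set (Set S) :=
  {Z | ∃ ξ : ℕ → X, AInf A ξ = Z}

/-- Strongly connected components: the loops maximal w.r.t. inclusion, i.e.
any other loop is contained in them or disjoint from them. -/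
def IsSCC {X S : Type*} (A : DetAuto X S) (Z : Set S) : Prop :=
  Z ∈ Loops A ∧ ∀ Z' ∈ Loops A, Z' ⊆ Z ∨ Z' ∩ Z = ∅

/-- The relation `Z₁ ↦ Z₂`. -/
def ReachRel {X S : Type*} (A : DetAuto X S) (Z₁ Z₂ : Set S) : Prop :=
  Z₁ ≠ Z₂ ∧ ∃ s ∈ Z₁, ∃ w : List X, A.run s w ∈ Z₂

/-- Terminal strongly connected components. -/
def IsTerminalSCC {X S : Type*} (A : DetAuto X S) (Z : Set S) : Prop :=
  IsSCC A Z ∧ ∀ Z' : Set S, IsSCC A Z' → Z ≠ Z' → ¬ ReachRel A Z Z'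

/-! A state `t` is *bottom* if every state reachable from `t` reaches `t` back; minimising the
number of reachable states shows that a bottom state is reachable from every state, and for a
bottom state `t` reachable from the start, `reach t` is a terminal SCC (it is realised by a word
running through a covering cycle of `t` forever). Hence a run whose infinity set is not a terminal
SCC either never meets a bottom state, or meets one, `t`, stays inside `reach t` and eventually
avoids some `z ∈ reach t` that it could still reach. In both cases the run eventually stays in a
set `P` of states that can be left from each of its states, and the words whose runs eventually
stay in such a `P` form a countable union of closed sets with empty interior: every prefix extends
to a word whose run leaves `P`. -/

open Filter PiNat

def cyclicWord {X : Type*} (c : List X) (hc : 0 < c.length) (n : ℕ) : X :=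
  c.get ⟨n % c.length, Nat.mod_lt _ hc⟩

lemma cyclicWord_length_add {X : Type*} {c : List X} (hc : 0 < c.length) (n : ℕ) :
    cyclicWord c hc (c.length + n) = cyclicWord c hc n := by
  simp [cyclicWord]

lemma ofFn_cyclicWord {X : Type*} {c : List X} (hc : 0 < c.length) {j : ℕ} (hj : j ≤ c.length) :
    (List.ofFn fun i : Fin j ↦ cyclicWord c hc i) = c.take j :=
  List.ext_getElem (by simpa using hj) fun i hi _ ↦ by
    simp only [List.length_ofFn] at hi
    simp [cyclicWord, Nat.mod_eq_of_lt (lt_of_lt_of_le hi hj)]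

namespace DetAuto

variable {X S : Type*} (A : DetAuto X S)

def reach (s : S) : Set S := Set.range (A.run s)

def IsBottom (s : S) : Prop := ∀ t ∈ A.reach s, s ∈ A.reach t

lemma run_append (s : S) (u v : List X) : A.run s (u ++ v) = A.run (A.run s u) v :=
  List.foldl_append

lemma mem_reach_self (s : S) : s ∈ A.reach s := ⟨[], rfl⟩

lemma reach_subset {s t : S} (h : t ∈ A.reach s) : A.reach t ⊆ A.reach s := by
  rintro _ ⟨v, rfl⟩
  obtain ⟨u, rfl⟩ := h
  exact ⟨u ++ v, A.run_append s u v⟩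

lemma run_ofFn_add (s : S) (ζ : ℕ → X) (m n : ℕ) :
    A.run s (List.ofFn fun i : Fin (m + n) ↦ ζ i) =
      A.run (A.run s (List.ofFn fun i : Fin m ↦ ζ i)) (List.ofFn fun i : Fin n ↦ ζ (m + i)) := by
  rw [List.ofFn_add, run_append]
  rfl

lemma statesAt_mem_reach (ξ : ℕ → X) {m n : ℕ} (h : m ≤ n) :
    A.statesAt ξ n ∈ A.reach (A.statesAt ξ m) := by
  obtain ⟨k, rfl⟩ := Nat.exists_eq_add_of_le h
  exact ⟨_, (A.run_ofFn_add A.start ξ m k).symm⟩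

lemma aInf_subset_reach (ξ : ℕ → X) (k : ℕ) : AInf A ξ ⊆ A.reach (A.statesAt ξ k) :=
  fun _ ht ↦
    let ⟨_, hm, hmt⟩ := ht k
    hmt ▸ A.statesAt_mem_reach ξ hm

lemma statesAt_wordCat (w : List X) (ζ : ℕ → X) (n : ℕ) :
    A.statesAt (wordCat w ζ) (w.length + n) =
      A.run (A.run A.start w) (List.ofFn fun i : Fin n ↦ ζ i) := by
  have hw : (List.ofFn fun i : Fin w.length ↦ wordCat w ζ i) = w :=
    List.ext_getElem (by simp) fun _ _ _ ↦ by simp [wordCat]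
  rw [statesAt, run_ofFn_add, hw]
  simp [wordCat]

lemma statesAt_wordCat_length (w : List X) (ζ : ℕ → X) :
    A.statesAt (wordCat w ζ) w.length = A.run A.start w :=
  A.statesAt_wordCat w ζ 0

lemma run_ofFn_cyclicWord {s : S} {c : List X} (hc : 0 < c.length) (hcs : A.run s c = s)
    (q : ℕ) {j : ℕ} (hj : j ≤ c.length) :
    A.run s (List.ofFn fun i : Fin (q * c.length + j) ↦ cyclicWord c hc i) =
      A.run s (c.take j) := by
  induction q with
  | zero => rw [zero_mul, zero_add, ofFn_cyclicWord hc hj]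
  | succ q ih =>
    rw [show (q + 1) * c.length + j = c.length + (q * c.length + j) by ring, run_ofFn_add,
      ofFn_cyclicWord hc le_rfl, List.take_length, hcs]
    simpa only [cyclicWord_length_add] using ih

lemma exists_mem_reach_isBottom [Finite S] (s : S) :
    ∃ t ∈ A.reach s, A.IsBottom t := by
  obtain ⟨t, hts, hmin⟩ := Set.exists_min_image (A.reach s) (fun t ↦ (A.reach t).ncard)
    (Set.toFinite _) ⟨s, A.mem_reach_self s⟩
  refine ⟨t, hts, fun t' ht' ↦ ?_⟩
  rw [Set.eq_of_subset_of_ncard_le (A.reach_subset ht') (hmin t' (A.reach_subset hts ht'))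
    (Set.toFinite _)]
  exact A.mem_reach_self t

section Bottom

variable {A}

lemma IsBottom.reach_eq {s t : S} (hs : A.IsBottom s) (ht : t ∈ A.reach s) :
    A.reach t = A.reach s :=
  (A.reach_subset ht).antisymm (A.reach_subset (hs t ht))

lemma IsBottom.exists_cycle_visiting [Nonempty X] {s : S} (hs : A.IsBottom s) {L : List S}
    (hL : ∀ t ∈ L, t ∈ A.reach s) :
    ∃ c ≠ [], A.run s c = s ∧ ∀ t ∈ L, ∃ j ≤ c.length, A.run s (c.take j) = t := by
  induction L with
  | nil =>
    obtain ⟨x⟩ := ‹Nonempty X›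
    obtain ⟨b, hb⟩ := hs _ ⟨[x], rfl⟩
    exact ⟨x :: b, List.cons_ne_nil _ _, hb, by simp⟩
  | cons t L ih =>
    obtain ⟨c, hc, hcs, hcL⟩ := ih fun t' ht' ↦ hL t' (List.mem_cons_of_mem _ ht')
    obtain ⟨a, rfl⟩ := hL t List.mem_cons_self
    obtain ⟨b, hb⟩ := hs _ ⟨a, rfl⟩
    refine ⟨c ++ a ++ b, by simp [hc], by rw [run_append, run_append, hcs, hb], ?_⟩
    rintro t' (_ | ⟨_, ht'⟩)
    · exact ⟨(c ++ a).length, by simp, by rw [List.take_left, run_append, hcs]⟩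
    · obtain ⟨j, hj, rfl⟩ := hcL t' ht'
      exact ⟨j, by simp; omega, by rw [List.append_assoc, List.take_append_of_le_length hj]⟩

lemma IsBottom.exists_covering_cycle [Finite S] [Nonempty X] {s : S} (hs : A.IsBottom s) :
    ∃ c ≠ [], A.run s c = s ∧ ∀ t ∈ A.reach s, ∃ j ≤ c.length, A.run s (c.take j) = t := by
  obtain ⟨c, hc, hcs, hcover⟩ :=
    hs.exists_cycle_visiting (L := (Set.toFinite (A.reach s)).toFinset.toList) (by simp)
  exact ⟨c, hc, hcs, fun t ht ↦ hcover t (by simpa using ht)⟩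

lemma IsBottom.reach_mem_loops [Finite S] [Nonempty X] {s : S} (hs₀ : s ∈ A.reach A.start)
    (hs : A.IsBottom s) : A.reach s ∈ Loops A := by
  obtain ⟨p, rfl⟩ := hs₀
  obtain ⟨c, hc, hcs, hcover⟩ := hs.exists_covering_cycle
  have hlen : 0 < c.length := List.length_pos_iff.2 hc
  refine ⟨wordCat p (cyclicWord c hlen), Set.ext fun t ↦ ⟨fun ht ↦ ?_, fun ht n ↦ ?_⟩⟩
  · rw [← A.statesAt_wordCat_length p]
    exact A.aInf_subset_reach _ _ ht
  · obtain ⟨j, hj, rfl⟩ := hcover t ht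
    have : n ≤ n * c.length := Nat.le_mul_of_pos_right n hlen
    refine ⟨p.length + (n * c.length + j), by omega, ?_⟩
    rw [statesAt_wordCat, run_ofFn_cyclicWord _ hlen hcs _ hj]

lemma IsBottom.isTerminalSCC [Finite S] [Nonempty X] {s : S} (hs₀ : s ∈ A.reach A.start)
    (hs : A.IsBottom s) : IsTerminalSCC A (A.reach s) := by
  have hloop := hs.reach_mem_loops hs₀
  have hscc : IsSCC A (A.reach s) := by
    refine ⟨hloop, ?_⟩
    rintro _ ⟨ξ, rfl⟩
    refine or_iff_not_imp_right.2 fun hne ↦ ?_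
    obtain ⟨t, htξ, hts⟩ := Set.nonempty_iff_ne_empty.2 hne
    obtain ⟨m, -, rfl⟩ := htξ 0
    exact (A.aInf_subset_reach ξ m).trans (A.reach_subset hts)
  refine ⟨hscc, fun Z hZ hne ⟨_, t, hts, u, hu⟩ ↦ hne ?_⟩
  have hmeet : A.run t u ∈ Z ∩ A.reach s := ⟨hu, A.reach_subset hts ⟨u, rfl⟩⟩
  exact ((hZ.2 _ hloop).resolve_right (Set.nonempty_iff_ne_empty.1 ⟨_, hmeet.symm⟩)).antisymm
    ((hscc.2 Z hZ.1).resolve_right (Set.nonempty_iff_ne_empty.1 ⟨_, hmeet⟩))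

end Bottom

section Topology

variable [TopologicalSpace X] [DiscreteTopology X]

lemma isClopen_setOf_statesAt (P : S → Prop) (n : ℕ) :
    IsClopen {ξ : ℕ → X | P (A.statesAt ξ n)} :=
  (isClopen_discrete {v : Fin n → X | P (A.run A.start (List.ofFn v))}).preimage
    (continuous_pi fun i ↦ continuous_apply (i : ℕ))

lemma isNowhereDense_setOf_forall_ge_statesAt {P : S → Prop}
    (hP : ∀ s, P s → ∃ u, ¬ P (A.run s u)) (k : ℕ) :
    IsNowhereDense {ξ : ℕ → X | ∀ n ≥ k, P (A.statesAt ξ n)} := by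
  have hclosed : IsClosed {ξ : ℕ → X | ∀ n ≥ k, P (A.statesAt ξ n)} := by
    simp only [Set.ofPred_forall]
    exact isClosed_iInter fun n ↦ isClosed_iInter fun _ ↦ (A.isClopen_setOf_statesAt P n).isClosed
  rw [hclosed.isNowhereDense_iff, Set.eq_empty_iff_forall_notMem]
  intro ξ hξ
  obtain ⟨_, ⟨x, N, rfl⟩, hξN, hN⟩ :=
    (isTopologicalBasis_cylinders fun _ ↦ X).exists_subset_of_mem_open hξ isOpen_interior
  rw [← mem_cylinder_iff_eq.1 hξN] at hN
  set m := max N k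
  obtain ⟨u, hu⟩ := hP _ (interior_subset hξ m (le_max_right _ _))
  set w := (List.ofFn fun i : Fin m ↦ ξ i) ++ u
  have hcyl : wordCat w (fun _ ↦ ξ 0) ∈ cylinder ξ N := fun i hi ↦ by
    have : i < m := lt_of_lt_of_le hi (le_max_left _ _)
    simp [w, wordCat, List.getElem_append_left, this, show i < m + u.length by omega]
  apply hu
  have := interior_subset (hN hcyl) w.length (by simp [w]; omega)
  rwa [statesAt_wordCat_length, run_append] at this

lemma isMeagre_setOf_eventually_statesAt {P : S → Prop} (hP : ∀ s, P s → ∃ u, ¬ P (A.run s u)) :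
    IsMeagre {ξ : ℕ → X | ∀ᶠ n in atTop, P (A.statesAt ξ n)} := by
  simp only [eventually_atTop, Set.ofPred_exists]
  exact isMeagre_iUnion fun k ↦ (A.isNowhereDense_setOf_forall_ge_statesAt hP k).isMeagre

end Topology

end DetAuto

theorem lang_meagre_general {X S : Type*} [Fintype S]
    [TopologicalSpace X] [DiscreteTopology X]
    (A : DetAuto X S) (T : Set (Set S))
    (hT : ∀ Z ∈ T, ¬ IsTerminalSCC A Z) :
    IsMeagre (Lang A T) := by
  have hnoBottom := A.isMeagre_setOf_eventually_statesAt (P := fun s ↦ ¬ A.IsBottom s)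
    fun s _ ↦
      let ⟨_, ⟨u, hu⟩, ht⟩ := A.exists_mem_reach_isBottom s
      ⟨u, not_not.2 (hu ▸ ht)⟩
  have havoid (z : S) := A.isMeagre_setOf_eventually_statesAt
    (P := fun s ↦ z ∈ A.reach s ∧ s ≠ z) fun _ ⟨⟨u, hu⟩, _⟩ ↦ ⟨u, fun h ↦ h.2 hu⟩
  refine (hnoBottom.union (isMeagre_iUnion havoid)).mono fun ξ hξ ↦ ?_
  by_cases h : ∃ k, A.IsBottom (A.statesAt ξ k)
  · obtain ⟨k, hk⟩ := h
    have : Nonempty X := ⟨ξ 0⟩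
    obtain ⟨z, hz, hzξ⟩ := Set.exists_of_ssubset <| (A.aInf_subset_reach ξ k).ssubset_of_ne
      fun heq ↦ hT _ hξ (heq ▸ hk.isTerminalSCC ⟨_, rfl⟩)
    refine Or.inr (Set.mem_iUnion.2 ⟨z, ?_⟩)
    filter_upwards [eventually_ge_atTop k, not_frequently.1 (mt frequently_atTop.1 hzξ)]
      with n hn hnz
    exact ⟨(hk.reach_eq (A.statesAt_mem_reach ξ hn)).symm ▸ hz, hnz⟩
  · exact Or.inl (Eventually.of_forall (not_exists.1 h))

/-- If no element of the table T is a terminal SCC then L(A,T) is meagre. -/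
theorem lang_meagre {X S : Type*} [Fintype X] [Fintype S]
    [TopologicalSpace X] [DiscreteTopology X]
    (A : DetAuto X S) (T : Set (Set S))
    (hT : ∀ Z ∈ T, ¬ IsTerminalSCC A Z) :
    IsMeagre (Lang A T) :=
  lang_meagre_general A T hT
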